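/- Define d₁ : A → L × B by d₁(a) := ((ρ_A a, σ(c₁ a)∘c₀), c₁ a) (well-defined by condition (M) and L Lagrangian), d₂ : L × B → W by d₂((v,α),b) := c₀ v − ρ_B b, g : L × B → V* by g((v,α),b) := −α + σ(b)∘c₀, and h : W → A* by h(w) := (a ↦ σ(c₁ a)(w)). Then: (i) Φ is surjective if and only if g induces a linear isomorphism from ker d₂ / im d₁ onto ker(β ↦ β∘ρ_A : V* → A*); (ii) Φ is bijective if and only if, in addition, ker d₁ = 0 and h induces a linear isomorphism from W / im d₂ onto A* / {β∘ρ_A : β ∈ V*}. In other words, the tangent chain map of a 1-shifted coisotropic structure is a quasi-isomorphism if and only if Φ is an isomorphism, and it induces an isomorphism on middle cohomology if and only if Φ is surjective. -/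
import Mathlib

private lemma mem_of_forall_dual {W : Type*} [AddCommGroup W] [Module ℝ W]
    (S : Submodule ℝ W) (w : W)
    (h : ∀ ξ : Module.Dual ℝ W, (∀ s ∈ S, ξ s = 0) → ξ w = 0) : w ∈ S := by
  by_contra hw
  have h1 : S.mkQ w ≠ 0 := by
    simpa [Submodule.mkQ_apply, Submodule.Quotient.mk_eq_zero] using hw
  have h2 : ¬ ∀ φ : Module.Dual ℝ (W ⧸ S), φ (S.mkQ w) = 0 := fun hall =>
    h1 ((Module.forall_dual_apply_eq_zero_iff ℝ _).mp hall)
  obtain ⟨φ, hφ⟩ := not_forall.mp h2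
  refine hφ ?_
  have := h (φ ∘ₗ S.mkQ) ?_
  · simpa using this
  · intro s hs
    have hz : S.mkQ s = 0 := by
      simpa [Submodule.mkQ_apply] using (Submodule.Quotient.mk_eq_zero S).mpr hs
    simp [LinearMap.comp_apply, hz]

private lemma mem_dualSub_of_forall {V : Type*} [AddCommGroup V] [Module ℝ V]
    [FiniteDimensional ℝ V]
    (K : Submodule ℝ (Module.Dual ℝ V)) (β : Module.Dual ℝ V)
    (h : ∀ u : V, (∀ κ ∈ K, κ u = 0) → β u = 0) : β ∈ K := by
  refine mem_of_forall_dual K β (fun Θ hΘ => ?_)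
  have he : ∀ f : Module.Dual ℝ V, f ((Module.evalEquiv ℝ V).symm Θ) = Θ f :=
    fun f => Module.apply_evalEquiv_symm_apply ℝ V f Θ
  rw [← he β]
  exact h _ (fun κ hκ => (he κ).trans (hΘ κ hκ))

private lemma exists_dual_factor {M W : Type*} [AddCommGroup M] [Module ℝ M]
    [AddCommGroup W] [Module ℝ W]
    (F : M →ₗ[ℝ] W) (e : M →ₗ[ℝ] ℝ) (h : LinearMap.ker F ≤ LinearMap.ker e) :
    ∃ ξ : Module.Dual ℝ W, ∀ m, ξ (F m) = e m := by
  obtain ⟨g, hg⟩ := ((LinearMap.ker F).liftQ F le_rfl).exists_leftInverse_of_injective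
      (Submodule.ker_liftQ_eq_bot _ F le_rfl le_rfl)
  refine ⟨((LinearMap.ker F).liftQ e h) ∘ₗ g, fun m => ?_⟩
  have h1 : F m = ((LinearMap.ker F).liftQ F le_rfl) (Submodule.Quotient.mk m) :=
    (Submodule.liftQ_apply _ F m).symm
  have h2 : g (((LinearMap.ker F).liftQ F le_rfl) (Submodule.Quotient.mk m))
      = Submodule.Quotient.mk m := by
    have := LinearMap.congr_fun hg (Submodule.Quotient.mk m)
    simpa using this
  calc (((LinearMap.ker F).liftQ e h) ∘ₗ g) (F m)
      = ((LinearMap.ker F).liftQ e h)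
          (g (((LinearMap.ker F).liftQ F le_rfl) (Submodule.Quotient.mk m))) := by
        rw [← h1]; rfl
    _ = e m := by rw [h2, Submodule.liftQ_apply]

/-- A subspace `L ⊆ V × V*` is Lagrangian if it equals its orthogonal
complement with respect to the symmetric pairing
`⟨(v,α),(w,β)⟩ = α(w) + β(v)`. -/
def IsLagrangian {V : Type*} [AddCommGroup V] [Module ℝ V]
    (L : Submodule ℝ (V × Module.Dual ℝ V)) : Prop :=
  ∀ x : V × Module.Dual ℝ V, x ∈ L ↔ ∀ y ∈ L, x.2 y.1 + y.2 x.1 = 0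

set_option maxHeartbeats 1000000 in
/-- The tangent chain map of a 1-shifted coisotropic structure is a
quasi-isomorphism if and only if `Φ : a ↦ ((ρ_A a, σ(c₁ a)∘c₀), c₁ a)` is an
isomorphism onto `X = L ×_c B`, and it induces an isomorphism on middle
cohomology if and only if `Φ` is surjective.  Here:
`d₁(a) = ((ρ_A a, σ(c₁ a)∘c₀), c₁ a)`, `d₂((v,α),b) = c₀ v − ρ_B b`,
`g((v,α),b) = −α + σ(b)∘c₀`, `h(w) = (a ↦ σ(c₁ a)(w))`, and "g (resp. h)
induces a linear isomorphism `ker d₂ / im d₁ ≅ ker(β ↦ β∘ρ_A)` (resp.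
`W / im d₂ ≅ A* / {β∘ρ_A}`)" is spelled out as well-definedness plus
injectivity plus surjectivity of the induced maps. -/
theorem phi_iso_iff_quasi_isomorphism
    {A B V W : Type*}
    [AddCommGroup A] [Module ℝ A] [FiniteDimensional ℝ A]
    [AddCommGroup B] [Module ℝ B] [FiniteDimensional ℝ B]
    [AddCommGroup V] [Module ℝ V] [FiniteDimensional ℝ V]
    [AddCommGroup W] [Module ℝ W] [FiniteDimensional ℝ W]
    (ρA : A →ₗ[ℝ] V) (ρB : B →ₗ[ℝ] W) (σ : B →ₗ[ℝ] Module.Dual ℝ W)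
    (c₀ : V →ₗ[ℝ] W) (c₁ : A →ₗ[ℝ] B)
    (hC : c₀ ∘ₗ ρA = ρB ∘ₗ c₁)
    (hH1 : ∀ b b' : B, σ b (ρB b') + σ b' (ρB b) = 0)
    (hH2 : ∀ b : B, ρB b = 0 → σ b = 0 → b = 0)
    (hH3 : ∀ (w : W) (ξ : Module.Dual ℝ W), (∀ b : B, σ b w + ξ (ρB b) = 0) →
      ∃ b : B, ρB b = w ∧ σ b = ξ)
    (L : Submodule ℝ (V × Module.Dual ℝ V)) (hL : IsLagrangian L)
    (hM : ∀ (a : A) (v : V) (α : Module.Dual ℝ V), (v, α) ∈ L →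
      α (ρA a) + σ (c₁ a) (c₀ v) = 0) :
    -- (i) Φ surjective ↔ g induces an isomorphism ker d₂ / im d₁ ≅ ker ρA*
    ((∀ (v : V) (α : Module.Dual ℝ V) (b : B),
        (v, α) ∈ L → c₀ v = ρB b → α = σ b ∘ₗ c₀ →
        ∃ a : A, ρA a = v ∧ σ (c₁ a) ∘ₗ c₀ = α ∧ c₁ a = b) ↔
      ((∀ (v : V) (α : Module.Dual ℝ V) (b : B), (v, α) ∈ L → c₀ v = ρB b →
          (-α + σ b ∘ₗ c₀) ∘ₗ ρA = 0) ∧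
       (∀ (v : V) (α : Module.Dual ℝ V) (b : B), (v, α) ∈ L → c₀ v = ρB b →
          -α + σ b ∘ₗ c₀ = 0 →
          ∃ a : A, ρA a = v ∧ σ (c₁ a) ∘ₗ c₀ = α ∧ c₁ a = b) ∧
       (∀ β : Module.Dual ℝ V, β ∘ₗ ρA = 0 →
          ∃ (v : V) (α : Module.Dual ℝ V) (b : B),
            (v, α) ∈ L ∧ c₀ v = ρB b ∧ -α + σ b ∘ₗ c₀ = β))) ∧
    -- (ii) Φ bijective ↔ in addition ker d₁ = 0 and
    --      h induces an isomorphism W / im d₂ ≅ A* / im ρA*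
    (((∀ (v : V) (α : Module.Dual ℝ V) (b : B),
        (v, α) ∈ L → c₀ v = ρB b → α = σ b ∘ₗ c₀ →
        ∃ a : A, ρA a = v ∧ σ (c₁ a) ∘ₗ c₀ = α ∧ c₁ a = b) ∧
      (∀ a a' : A, ρA a = ρA a' → σ (c₁ a) ∘ₗ c₀ = σ (c₁ a') ∘ₗ c₀ →
        c₁ a = c₁ a' → a = a')) ↔
      (((∀ (v : V) (α : Module.Dual ℝ V) (b : B), (v, α) ∈ L → c₀ v = ρB b →
           (-α + σ b ∘ₗ c₀) ∘ₗ ρA = 0) ∧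
        (∀ (v : V) (α : Module.Dual ℝ V) (b : B), (v, α) ∈ L → c₀ v = ρB b →
           -α + σ b ∘ₗ c₀ = 0 →
           ∃ a : A, ρA a = v ∧ σ (c₁ a) ∘ₗ c₀ = α ∧ c₁ a = b) ∧
        (∀ β : Module.Dual ℝ V, β ∘ₗ ρA = 0 →
           ∃ (v : V) (α : Module.Dual ℝ V) (b : B),
             (v, α) ∈ L ∧ c₀ v = ρB b ∧ -α + σ b ∘ₗ c₀ = β)) ∧
       (∀ a : A, ρA a = 0 → σ (c₁ a) ∘ₗ c₀ = 0 → c₁ a = 0 → a = 0) ∧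
       ((∀ (v : V) (α : Module.Dual ℝ V) (b : B), (v, α) ∈ L →
           ∃ β : Module.Dual ℝ V, ∀ a : A, σ (c₁ a) (c₀ v - ρB b) = β (ρA a)) ∧
        (∀ w : W, (∃ β : Module.Dual ℝ V, ∀ a : A, σ (c₁ a) w = β (ρA a)) →
           ∃ (v : V) (α : Module.Dual ℝ V) (b : B),
             (v, α) ∈ L ∧ c₀ v - ρB b = w) ∧
        (∀ γ : Module.Dual ℝ A, ∃ (w : W) (β : Module.Dual ℝ V),
           ∀ a : A, γ a = σ (c₁ a) w + β (ρA a))))) := by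
  -- pointwise version of hC
  have hC' : ∀ a : A, c₀ (ρA a) = ρB (c₁ a) := fun a => by
    simpa using LinearMap.congr_fun hC a
  -- key consequence of (M), (H1), (C)
  have key1 : ∀ (a : A) (v : V) (α : Module.Dual ℝ V) (b : B), (v, α) ∈ L →
      c₀ v = ρB b → α (ρA a) = σ b (c₀ (ρA a)) := by
    intro a v α b hm he
    have h1 := hM a v α hm
    rw [he] at h1
    have h2 := hH1 b (c₁ a)
    rw [← hC' a] at h2
    linarith
  -- g1 : well-definedness of g (unconditional)
  have g1 : ∀ (v : V) (α : Module.Dual ℝ V) (b : B), (v, α) ∈ L → c₀ v = ρB b →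
      (-α + σ b ∘ₗ c₀) ∘ₗ ρA = 0 := by
    intro v α b hm he
    ext a
    have := key1 a v α b hm he
    simp only [LinearMap.comp_apply, LinearMap.add_apply, LinearMap.neg_apply,
      LinearMap.zero_apply]
    linarith
  -- under surjectivity of Φ, the "orthogonal" of K is contained in the image of ρA
  have hK : (∀ (v : V) (α : Module.Dual ℝ V) (b : B),
        (v, α) ∈ L → c₀ v = ρB b → α = σ b ∘ₗ c₀ →
        ∃ a : A, ρA a = v ∧ σ (c₁ a) ∘ₗ c₀ = α ∧ c₁ a = b) →
      ∀ u : V, (∀ (v : V) (α : Module.Dual ℝ V) (b : B), (v, α) ∈ L →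
        c₀ v = ρB b → α u = σ b (c₀ u)) → ∃ a, ρA a = u := by
    intro hsurj u hu
    let F : (↥L × B) →ₗ[ℝ] W :=
      { toFun := fun p => c₀ (p.1 : V × Module.Dual ℝ V).1 + ρB p.2
        map_add' := by
          intro x y
          simp only [Prod.fst_add, Prod.snd_add, Submodule.coe_add, map_add]
          abel
        map_smul' := by
          intro c x
          simp only [Prod.smul_fst, Prod.smul_snd, Submodule.coe_smul, map_smul,
            RingHom.id_apply, smul_add] }
    let e : (↥L × B) →ₗ[ℝ] ℝ :=
      { toFun := fun p => -((p.1 : V × Module.Dual ℝ V).2 u) - σ p.2 (c₀ u)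
        map_add' := by
          intro x y
          simp only [Prod.fst_add, Prod.snd_add, Submodule.coe_add,
            LinearMap.add_apply, map_add]
          ring
        map_smul' := by
          intro c x
          simp only [Prod.smul_fst, Prod.smul_snd, Submodule.coe_smul, map_smul,
            LinearMap.smul_apply, RingHom.id_apply, smul_eq_mul]
          ring }
    have hFapp : ∀ (x : ↥L) (b : B),
        F (x, b) = c₀ (x : V × Module.Dual ℝ V).1 + ρB b := fun _ _ => rfl
    have heapp : ∀ (x : ↥L) (b : B),
        e (x, b) = -((x : V × Module.Dual ℝ V).2 u) - σ b (c₀ u) := fun _ _ => rfl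
    have hker : LinearMap.ker F ≤ LinearMap.ker e := by
      rintro ⟨x, b⟩ hp
      have hp' : c₀ (x : V × Module.Dual ℝ V).1 + ρB b = 0 := hp
      have he' : c₀ (x : V × Module.Dual ℝ V).1 = ρB (-b) := by
        rw [map_neg]
        exact eq_neg_of_add_eq_zero_left hp'
      have hx : ((x : V × Module.Dual ℝ V).1, (x : V × Module.Dual ℝ V).2) ∈ L := x.2
      have := hu _ _ (-b) hx he'
      rw [map_neg] at this
      simp only [LinearMap.mem_ker, heapp, LinearMap.neg_apply] at this ⊢
      linarith
    obtain ⟨ξ, hξ⟩ := exists_dual_factor (M := ↥L × B) (W := W) F e hker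
    obtain ⟨b', hb1, hb2⟩ := hH3 (c₀ u) ξ (by
      intro b
      have h := hξ ((0 : ↥L), b)
      rw [hFapp, heapp] at h
      simp only [ZeroMemClass.coe_zero, Prod.fst_zero, Prod.snd_zero, map_zero,
        LinearMap.zero_apply, zero_add, neg_zero, zero_sub] at h
      linarith)
    have hmem : (u, σ b' ∘ₗ c₀) ∈ L := by
      refine (hL (u, σ b' ∘ₗ c₀)).mpr (fun y hy => ?_)
      have h := hξ (⟨y, hy⟩, 0)
      rw [hFapp, heapp] at h
      simp only [map_zero, add_zero, LinearMap.zero_apply, sub_zero] at h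
      show (σ b' ∘ₗ c₀) y.1 + y.2 u = 0
      rw [LinearMap.comp_apply, hb2, h]
      ring
    obtain ⟨a, ha, -, -⟩ := hsurj u (σ b' ∘ₗ c₀) b' hmem hb1.symm rfl
    exact ⟨a, ha⟩
  -- g3 : surjectivity of the induced map, given surjectivity of Φ
  have g3 : (∀ (v : V) (α : Module.Dual ℝ V) (b : B),
        (v, α) ∈ L → c₀ v = ρB b → α = σ b ∘ₗ c₀ →
        ∃ a : A, ρA a = v ∧ σ (c₁ a) ∘ₗ c₀ = α ∧ c₁ a = b) →
      ∀ β : Module.Dual ℝ V, β ∘ₗ ρA = 0 →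
        ∃ (v : V) (α : Module.Dual ℝ V) (b : B),
          (v, α) ∈ L ∧ c₀ v = ρB b ∧ -α + σ b ∘ₗ c₀ = β := by
    intro hsurj β hβ
    let K : Submodule ℝ (Module.Dual ℝ V) :=
      { carrier := {γ | ∃ (v : V) (α : Module.Dual ℝ V) (b : B),
          (v, α) ∈ L ∧ c₀ v = ρB b ∧ -α + σ b ∘ₗ c₀ = γ}
        add_mem' := by
          rintro γ γ' ⟨v, α, b, h1, h2, h3⟩ ⟨v', α', b', h1', h2', h3'⟩
          refine ⟨v + v', α + α', b + b', L.add_mem h1 h1',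
            by simp [map_add, h2, h2'], ?_⟩
          rw [← h3, ← h3']
          simp only [map_add, LinearMap.add_comp, neg_add]
          abel
        zero_mem' := ⟨0, 0, 0, L.zero_mem, by simp, by simp⟩
        smul_mem' := by
          rintro c γ ⟨v, α, b, h1, h2, h3⟩
          refine ⟨c • v, c • α, c • b, L.smul_mem c h1,
            by simp [map_smul, h2], ?_⟩
          rw [← h3]
          simp only [map_smul, LinearMap.smul_comp, smul_add, smul_neg] }
    have hmemK : β ∈ K := by
      refine mem_dualSub_of_forall K β (fun u hu => ?_)
      have hu' : ∀ (v : V) (α : Module.Dual ℝ V) (b : B), (v, α) ∈ L →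
          c₀ v = ρB b → α u = σ b (c₀ u) := by
        intro v α b hm he
        have := hu (-α + σ b ∘ₗ c₀) ⟨v, α, b, hm, he, rfl⟩
        simp only [LinearMap.add_apply, LinearMap.neg_apply, LinearMap.comp_apply] at this
        linarith
      obtain ⟨a, ha⟩ := hK hsurj u hu'
      rw [← ha]
      simpa using LinearMap.congr_fun hβ a
    obtain ⟨v, α, b, h1, h2, h3⟩ := hmemK
    exact ⟨v, α, b, h1, h2, h3⟩
  -- h1 : well-definedness of h (unconditional)
  have h1wd : ∀ (v : V) (α : Module.Dual ℝ V) (b : B), (v, α) ∈ L →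
      ∃ β : Module.Dual ℝ V, ∀ a : A, σ (c₁ a) (c₀ v - ρB b) = β (ρA a) := by
    intro v α b hm
    refine ⟨-α + σ b ∘ₗ c₀, fun a => ?_⟩
    have h1 := hM a v α hm
    have h2 := hH1 b (c₁ a)
    rw [← hC' a] at h2
    simp only [map_sub, LinearMap.add_apply, LinearMap.neg_apply, LinearMap.comp_apply]
    linarith
  -- h2 : injectivity of the induced map on W / im d₂, given surjectivity of Φ
  have h2of : (∀ (v : V) (α : Module.Dual ℝ V) (b : B),
        (v, α) ∈ L → c₀ v = ρB b → α = σ b ∘ₗ c₀ →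
        ∃ a : A, ρA a = v ∧ σ (c₁ a) ∘ₗ c₀ = α ∧ c₁ a = b) →
      ∀ w : W, (∃ β : Module.Dual ℝ V, ∀ a : A, σ (c₁ a) w = β (ρA a)) →
        ∃ (v : V) (α : Module.Dual ℝ V) (b : B),
          (v, α) ∈ L ∧ c₀ v - ρB b = w := by
    rintro hsurj w ⟨β, hβ⟩
    let S : Submodule ℝ W :=
      { carrier := {w | ∃ (v : V) (α : Module.Dual ℝ V) (b : B),
          (v, α) ∈ L ∧ c₀ v - ρB b = w}
        add_mem' := by
          rintro w₁ w₂ ⟨v, α, b, h1, h2⟩ ⟨v', α', b', h1', h2'⟩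
          refine ⟨v + v', α + α', b + b', L.add_mem h1 h1', ?_⟩
          rw [← h2, ← h2']
          simp only [map_add]
          abel
        zero_mem' := ⟨0, 0, 0, L.zero_mem, by simp⟩
        smul_mem' := by
          rintro c w₁ ⟨v, α, b, h1, h2⟩
          refine ⟨c • v, c • α, c • b, L.smul_mem c h1, ?_⟩
          rw [← h2]
          simp [map_smul, smul_sub] }
    have hmemS : w ∈ S := by
      refine mem_of_forall_dual S w (fun ξ hξ => ?_)
      have hξρ : ∀ b : B, ξ (ρB b) = 0 := by
        intro b
        have := hξ _ ⟨0, 0, b, L.zero_mem, rfl⟩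
        simpa using this
      obtain ⟨b₀, hb1, hb2⟩ := hH3 0 ξ (by intro b; simp [hξρ b])
      have hmem : ((0 : V), σ b₀ ∘ₗ c₀) ∈ L := by
        refine (hL _).mpr (fun y hy => ?_)
        have hy' : ((y.1 : V), y.2) ∈ L := hy
        have := hξ _ ⟨y.1, y.2, 0, hy', rfl⟩
        simp only [map_zero, sub_zero] at this
        show (σ b₀ ∘ₗ c₀) y.1 + y.2 0 = 0
        rw [LinearMap.comp_apply, hb2, this, map_zero, add_zero]
      obtain ⟨a, ha1, -, ha3⟩ := hsurj 0 (σ b₀ ∘ₗ c₀) b₀ hmem (by simp [hb1]) rfl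
      have : ξ w = σ (c₁ a) w := by rw [ha3, hb2]
      rw [this, hβ a, ha1, map_zero]
    obtain ⟨v, α, b, h1, h2⟩ := hmemS
    exact ⟨v, α, b, h1, h2⟩
  -- h3 : surjectivity of the induced map on A*, given injectivity of Φ
  have h3of : (∀ a : A, ρA a = 0 → σ (c₁ a) ∘ₗ c₀ = 0 → c₁ a = 0 → a = 0) →
      ∀ γ : Module.Dual ℝ A, ∃ (w : W) (β : Module.Dual ℝ V),
        ∀ a : A, γ a = σ (c₁ a) w + β (ρA a) := by
    intro h0 γ
    let R : Submodule ℝ (Module.Dual ℝ A) :=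
      { carrier := {γ | ∃ (w : W) (β : Module.Dual ℝ V),
          ∀ a : A, γ a = σ (c₁ a) w + β (ρA a)}
        add_mem' := by
          rintro γ₁ γ₂ ⟨w₁, β₁, h⟩ ⟨w₂, β₂, h'⟩
          refine ⟨w₁ + w₂, β₁ + β₂, fun a => ?_⟩
          simp only [LinearMap.add_apply, map_add, h a, h' a]
          ring
        zero_mem' := ⟨0, 0, by intro a; simp⟩
        smul_mem' := by
          rintro c γ₁ ⟨w₁, β₁, h⟩
          refine ⟨c • w₁, c • β₁, fun a => ?_⟩
          simp only [LinearMap.smul_apply, map_smul, smul_eq_mul, h a]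
          ring }
    have hmemR : γ ∈ R := by
      refine mem_dualSub_of_forall R γ (fun a₀ h₀ => ?_)
      have hσ : σ (c₁ a₀) = 0 := by
        ext w'
        have := h₀ ((σ.flip w') ∘ₗ c₁) ⟨w', 0, by intro a; simp⟩
        simpa using this
      have hρ : ρA a₀ = 0 := by
        refine (Module.forall_dual_apply_eq_zero_iff ℝ _).mp (fun β => ?_)
        have := h₀ (β ∘ₗ ρA) ⟨0, β, by intro a; simp⟩
        simpa using this
      have hc : c₁ a₀ = 0 := hH2 _ (by rw [← hC' a₀, hρ, map_zero]) hσ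
      rw [h0 a₀ hρ (by rw [hσ]; exact LinearMap.zero_comp c₀) hc, map_zero]
    obtain ⟨w, β, h⟩ := hmemR
    exact ⟨w, β, h⟩
  constructor
  · constructor
    · intro hsurj
      exact ⟨g1, fun v α b hm he h => hsurj v α b hm he (neg_add_eq_zero.mp h),
        g3 hsurj⟩
    · rintro ⟨-, g2, -⟩ v α b hm he hα
      exact g2 v α b hm he (by rw [hα, neg_add_cancel])
  · constructor
    · rintro ⟨hsurj, hinj⟩
      have h0 : ∀ a : A, ρA a = 0 → σ (c₁ a) ∘ₗ c₀ = 0 → c₁ a = 0 → a = 0 := by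
        intro a e1 e2 e3
        exact hinj a 0 (by simp [e1]) (by simp [e2]) (by simp [e3])
      exact ⟨⟨g1, fun v α b hm he h => hsurj v α b hm he (neg_add_eq_zero.mp h),
        g3 hsurj⟩, h0, h1wd, h2of hsurj, h3of h0⟩
    · rintro ⟨⟨-, g2, -⟩, h0, -⟩
      refine ⟨fun v α b hm he hα => g2 v α b hm he (by rw [hα, neg_add_cancel]), ?_⟩
      intro a a' e1 e2 e3
      have hz := h0 (a - a') (by simp [map_sub, e1]) ?_ (by simp [map_sub, e3])
      · exact sub_eq_zero.mp hz
      · simp [map_sub, LinearMap.sub_comp, e2]
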